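/- arXiv:2311.06896 — 7 statements merged into one kernel-verified Lean document; each statement's English description precedes it below -/
import Mathlib

section
/- For the exponential utility u(t) = (1/γ)(1 - e^{-γt}) with γ > 0, the Optimized Certainty Equivalent coincides with the Certainty Equivalent: sup_{η∈ℝ} {η + E[u(X-η)]} = u^{-1}(E[u(X)]) for any bounded random variable X. -/
open MeasureTheory Real

/-!
Writing `M = E[exp (-γ X)]`, the OCE objective is `η + (1 - exp (γ η) M) / γ`, a concave
function of `η`. The inequality `log x ≤ x - 1` at `x = exp (γ η) M` bounds it by
`-(1/γ) log M`, with equality at `η = -(1/γ) log M`; and `1 - γ E[u(X)] = M`, so this bound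
is the certainty equivalent.
-/

lemma integral_exp_utility_sub {Ω : Type*} [MeasurableSpace Ω] {μ : Measure Ω}
    [IsProbabilityMeasure μ] {X : Ω → ℝ} {γ : ℝ}
    (hint : Integrable (fun ω => exp (-γ * X ω)) μ) (η : ℝ) :
    ∫ ω, (1 - exp (-γ * (X ω - η))) / γ ∂μ
      = (1 - exp (γ * η) * ∫ ω, exp (-γ * X ω) ∂μ) / γ := by
  have hsplit : ∀ ω, exp (-γ * (X ω - η)) = exp (γ * η) * exp (-γ * X ω) := by
    intro ω
    rw [← exp_add]
    ring_nf
  simp_rw [hsplit]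
  rw [integral_div, integral_sub (integrable_const 1) (hint.const_mul _), integral_const_mul]
  simp

lemma isGreatest_range_add_exp_utility {γ M : ℝ} (hγ : 0 < γ) (hM : 0 < M) :
    IsGreatest (Set.range fun η => η + (1 - exp (γ * η) * M) / γ) (-(1 / γ) * log M) := by
  refine ⟨⟨-(1 / γ) * log M, ?_⟩, ?_⟩
  · have hexp : exp (γ * (-(1 / γ) * log M)) * M = 1 := by
      rw [show γ * (-(1 / γ) * log M) = -log M by field_simp, exp_neg, exp_log hM,
        inv_mul_cancel₀ hM.ne']
    simp only [hexp, sub_self, zero_div, add_zero]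
  · rintro _ ⟨η, rfl⟩
    have hlog : log (exp (γ * η) * M) ≤ exp (γ * η) * M - 1 :=
      log_le_sub_one_of_pos (by positivity)
    rw [log_mul (exp_ne_zero _) hM.ne', log_exp] at hlog
    have key : η + (1 - exp (γ * η) * M) / γ - -(1 / γ) * log M
        = -(exp (γ * η) * M - 1 - (γ * η + log M)) / γ := by
      field_simp
      ring
    have : -(exp (γ * η) * M - 1 - (γ * η + log M)) / γ ≤ 0 :=
      div_nonpos_of_nonpos_of_nonneg (by linarith) hγ.le
    linarith

/-- For the exponential utility `u t = (1/γ)(1 - exp (-γ t))` with `γ > 0`,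
the Optimized Certainty Equivalent coincides with the Certainty Equivalent
`u⁻¹(E[u(X)]) = -(1/γ) ln (1 - γ E[u(X)])` for any bounded random variable `X`. -/
theorem oce_exponential_eq_certaintyEquivalent
    {Ω : Type*} [MeasurableSpace Ω] (μ : Measure Ω) [IsProbabilityMeasure μ]
    (X : Ω → ℝ) (hX : Measurable X) (C : ℝ) (hbdd : ∀ ω, |X ω| ≤ C)
    (γ : ℝ) (hγ : 0 < γ) :
    (⨆ η : ℝ, (η + ∫ ω, (1 - Real.exp (-γ * (X ω - η))) / γ ∂μ))
      = -(1 / γ) * Real.log (1 - γ * ∫ ω, (1 - Real.exp (-γ * X ω)) / γ ∂μ) := by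
  have hint : Integrable (fun ω => exp (-γ * X ω)) μ :=
    ProbabilityTheory.integrable_exp_mul_of_mem_Icc (a := -C) (b := C) hX.aemeasurable
      (ae_of_all _ fun ω => abs_le.mp (hbdd ω))
  have hM : 0 < ∫ ω, exp (-γ * X ω) ∂μ := integral_exp_pos hint
  have hCE : 1 - γ * ∫ ω, (1 - exp (-γ * X ω)) / γ ∂μ = ∫ ω, exp (-γ * X ω) ∂μ := by
    have h0 := integral_exp_utility_sub hint 0
    simp only [sub_zero, mul_zero, exp_zero, one_mul] at h0
    rw [h0]
    field_simp
    ring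
  simp_rw [integral_exp_utility_sub hint, hCE]
  exact (isGreatest_range_add_exp_utility hγ hM).isLUB.ciSup_eq
end

section
/- For the utility u(t) = t - t²/2 for t < 1 and u(t) = 1/2 for t ≥ 1, and any bounded random variable X satisfying X ≤ 1 + E[X] almost surely, the Optimized Certainty Equivalent equals the mean-variance criterion: S_u(X) = E[X] - (1/2)Var(X). -/
open MeasureTheory Real

noncomputable def gOCE (t : ℝ) : ℝ := if t < 1 then t - t ^ 2 / 2 else 1 / 2

lemma gOCE_meas : Measurable gOCE := by
  unfold gOCE
  exact Measurable.ite (measurableSet_lt measurable_id measurable_const)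
    (by fun_prop) measurable_const

lemma gOCE_le (s t : ℝ) (hs : s ≤ 1) : gOCE t ≤ gOCE s + (1 - s) * (t - s) := by
  unfold gOCE
  split_ifs with h1 h2 h2
  · nlinarith [sq_nonneg (t - s)]
  · nlinarith [sq_nonneg (1 - t)]
  · nlinarith [sq_nonneg (1 - s),
      mul_nonneg (by linarith : (0:ℝ) ≤ 1 - s) (by linarith : (0:ℝ) ≤ t - 1)]
  · nlinarith

lemma gOCE_eq (t : ℝ) (ht : t ≤ 1) : gOCE t = t - t ^ 2 / 2 := by
  unfold gOCE
  split_ifs with h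
  · rfl
  · have : t = 1 := le_antisymm ht (not_lt.mp h)
    rw [this]; norm_num

lemma gOCE_abs_le (t B : ℝ) (h : |t| ≤ B) : |gOCE t| ≤ B + B ^ 2 / 2 + 1 := by
  obtain ⟨h1, h2⟩ := abs_le.mp h
  unfold gOCE
  split_ifs with hlt <;> rw [abs_le] <;> constructor <;>
    nlinarith [sq_nonneg t, mul_nonneg (by linarith : (0:ℝ) ≤ B - t)
      (by linarith : (0:ℝ) ≤ B + t)]

/-- For the utility `u t = t - t²/2` for `t < 1` and `u t = 1/2` for `t ≥ 1`,
and any bounded random variable `X` with `X ≤ 1 + E[X]` almost surely, the Optimized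
Certainty Equivalent equals the mean-variance criterion `E[X] - (1/2) Var(X)`. -/
theorem oce_mean_variance
    {Ω : Type*} [MeasurableSpace Ω] (μ : Measure Ω) [IsProbabilityMeasure μ]
    (X : Ω → ℝ) (hX : Measurable X) (C : ℝ) (hXbdd : ∀ ω, |X ω| ≤ C)
    (hsupp : ∀ᵐ ω ∂μ, X ω ≤ 1 + ∫ ω', X ω' ∂μ) :
    (⨆ η : ℝ, (η + ∫ ω, (if X ω - η < 1 then (X ω - η) - (X ω - η) ^ 2 / 2
        else (1 : ℝ) / 2) ∂μ))
      = (∫ ω, X ω ∂μ) - (1 / 2) * ∫ ω, (X ω - ∫ ω', X ω' ∂μ) ^ 2 ∂μ := by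
  set m := ∫ ω, X ω ∂μ with hm
  have hg : ∀ (η : ℝ) (ω : Ω),
      (if X ω - η < 1 then (X ω - η) - (X ω - η) ^ 2 / 2 else (1:ℝ)/2)
        = gOCE (X ω - η) := fun _ _ => rfl
  simp only [hg]
  -- integrability of bounded measurable functions
  have bdd_int : ∀ (f : Ω → ℝ), Measurable f → ∀ (B : ℝ), (∀ ω, |f ω| ≤ B) →
      Integrable f μ := fun f hf B hB =>
    ⟨hf.aestronglyMeasurable, HasFiniteIntegral.of_bounded (C := B)
      (ae_of_all _ fun ω => by simpa [Real.norm_eq_abs] using hB ω)⟩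
  have hXint : Integrable X μ := bdd_int X hX C hXbdd
  have key : ∀ η : ℝ, Integrable (fun ω => gOCE (X ω - η)) μ := by
    intro η
    refine bdd_int _ (gOCE_meas.comp (hX.sub measurable_const))
      ((C + |η|) + (C + |η|) ^ 2 / 2 + 1) fun ω => ?_
    refine gOCE_abs_le _ _ ?_
    calc |X ω - η| ≤ |X ω| + |η| := abs_sub _ _
      _ ≤ C + |η| := by linarith [hXbdd ω]
  have hsq : Integrable (fun ω => (X ω - m) ^ 2) μ := by
    refine bdd_int _ ((hX.sub measurable_const).pow_const 2) ((C + |m|) ^ 2) fun ω => ?_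
    rw [abs_pow]
    have h1 : |X ω - m| ≤ C + |m| := by
      calc |X ω - m| ≤ |X ω| + |m| := abs_sub _ _
        _ ≤ C + |m| := by linarith [hXbdd ω]
    have h0 : (0:ℝ) ≤ |X ω - m| := abs_nonneg _
    nlinarith
  have hXmint : Integrable (fun ω => X ω - m) μ := hXint.sub (integrable_const m)
  have hone1 : Integrable (fun ω => 1 - (X ω - m)) μ := (integrable_const 1).sub hXmint
  have hXm_le : ∀ᵐ ω ∂μ, X ω - m ≤ 1 := hsupp.mono fun ω h => by linarith
  have hcenter : ∫ ω, (X ω - m) ∂μ = 0 := by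
    rw [show (fun ω => X ω - m) = fun ω => X ω - m from rfl, integral_sub hXint (integrable_const m), integral_const]
    simp [hm]
  -- value at η = m
  have hFm : m + ∫ ω, gOCE (X ω - m) ∂μ = m - (1/2) * ∫ ω, (X ω - m) ^ 2 ∂μ := by
    have h1 : ∫ ω, gOCE (X ω - m) ∂μ = ∫ ω, ((X ω - m) - (X ω - m) ^ 2 / 2) ∂μ :=
      integral_congr_ae (hXm_le.mono fun ω h => gOCE_eq _ h)
    rw [h1, integral_sub hXmint (hsq.div_const 2),
      hcenter, integral_div]
    ring
  -- upper bound
  have hub : ∀ η : ℝ, η + ∫ ω, gOCE (X ω - η) ∂μ ≤ m + ∫ ω, gOCE (X ω - m) ∂μ := by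
    intro η
    have hint1 : Integrable (fun ω => (1 - (X ω - m)) * (m - η)) μ :=
      hone1.mul_const _
    have hmono : ∫ ω, gOCE (X ω - η) ∂μ
        ≤ ∫ ω, (gOCE (X ω - m) + (1 - (X ω - m)) * (m - η)) ∂μ := by
      refine integral_mono_ae (key η) ((key m).add hint1) (hXm_le.mono fun ω h => ?_)
      have h2 := gOCE_le (X ω - m) (X ω - η) h
      have h3 : (X ω - η) - (X ω - m) = m - η := by ring
      rw [h3] at h2
      exact h2
    have hsplit : ∫ ω, (gOCE (X ω - m) + (1 - (X ω - m)) * (m - η)) ∂μ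
        = (∫ ω, gOCE (X ω - m) ∂μ) + (∫ ω, (1 - (X ω - m)) ∂μ) * (m - η) := by
      rw [integral_add (key m) hint1, integral_mul_const]
    have hone : ∫ ω, (1 - (X ω - m)) ∂μ = 1 := by
      rw [integral_sub (integrable_const 1) hXmint,
        hcenter, integral_const]
      simp
    rw [hsplit, hone] at hmono
    linarith
  apply le_antisymm
  · exact ciSup_le fun η => (hub η).trans_eq hFm
  · have hb : BddAbove (Set.range fun η : ℝ => η + ∫ ω, gOCE (X ω - η) ∂μ) :=
      ⟨m + ∫ ω, gOCE (X ω - m) ∂μ, by rintro _ ⟨η, rfl⟩; exact hub η⟩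
    rw [← hFm]
    exact le_ciSup hb m
end

section
/- The normalized Optimized Certainty Equivalent converges to the expectation: lim_{δ→0+} (1/δ) S_u(δX) = E[X] for every bounded random variable X. -/
open MeasureTheory Real Filter
open Topology

/-- The normalized Optimized Certainty Equivalent converges to the
expectation: `lim_{δ→0⁺} (1/δ) S_u(δ X) = E[X]` for every bounded random variable `X`.
Here `u` is concave, non-decreasing, `u 0 = 0`, and differentiable at `0` with
`u'(0) = 1`. -/
theorem oce_risk_neutral_limit
    {Ω : Type*} [MeasurableSpace Ω] (μ : Measure Ω) [IsProbabilityMeasure μ]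
    (u : ℝ → ℝ) (hu_mono : Monotone u) (hu_conc : ConcaveOn ℝ Set.univ u)
    (hu0 : u 0 = 0) (hu' : HasDerivAt u 1 0)
    (X : Ω → ℝ) (hX : Measurable X) (C : ℝ) (hXbdd : ∀ ω, |X ω| ≤ C) :
    Tendsto (fun δ : ℝ => (1 / δ) * ⨆ η : ℝ, (η + ∫ ω, u (δ * X ω - η) ∂μ))
      (nhdsWithin 0 (Set.Ioi 0)) (nhds (∫ ω, X ω ∂μ)) := by
  set B : ℝ := |C| + 1 with hBdef
  have hB : (0:ℝ) < B := by positivity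
  have hXB : ∀ ω, |X ω| ≤ B := by
    intro ω
    have := hXbdd ω
    have h2 : C ≤ |C| := le_abs_self C
    simp only [hBdef]; linarith
  -- slope tendsto at 0
  have hslope : Tendsto (fun t : ℝ => u t / t) (𝓝[≠] 0) (𝓝 1) := by
    have h := hasDerivAt_iff_tendsto_slope.mp hu'
    have heq : (fun t : ℝ => u t / t) = slope u 0 := by
      funext t; simp [slope_def_field, hu0]
    rw [heq]; exact h
  -- antitone slope
  have hanti : ∀ x y : ℝ, x ≠ 0 → y ≠ 0 → x ≤ y → u y / y ≤ u x / x := by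
    intro x y hx hy hxy
    have h := (hu_conc.neg).secant_mono (a := 0) (x := x) (y := y)
      (Set.mem_univ _) (Set.mem_univ _) (Set.mem_univ _) hx hy hxy
    simp only [Pi.neg_apply, hu0, neg_zero, sub_zero] at h
    rw [neg_div, neg_div] at h
    linarith
  have hIoi : Tendsto (fun t : ℝ => u t / t) (𝓝[>] 0) (𝓝 1) :=
    hslope.mono_left (nhdsWithin_mono _ fun x hx => ne_of_gt hx)
  have hIio : Tendsto (fun t : ℝ => u t / t) (𝓝[<] 0) (𝓝 1) :=
    hslope.mono_left (nhdsWithin_mono _ fun x hx => ne_of_lt hx)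
  have hle1 : ∀ y : ℝ, 0 < y → u y / y ≤ 1 := by
    intro y hy
    refine ge_of_tendsto hIoi ?_
    filter_upwards [Ioc_mem_nhdsGT_of_mem (Set.mem_Ico.mpr ⟨le_refl 0, hy⟩)] with t ht
    exact hanti t y (ne_of_gt ht.1) (ne_of_gt hy) ht.2
  have hge1 : ∀ y : ℝ, y < 0 → 1 ≤ u y / y := by
    intro y hy
    refine le_of_tendsto hIio ?_
    filter_upwards [Ico_mem_nhdsLT_of_mem (Set.mem_Ioc.mpr ⟨hy, le_refl 0⟩)] with t ht
    exact hanti y t (ne_of_lt hy) (ne_of_lt ht.2) ht.1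
  have u_le : ∀ y : ℝ, u y ≤ y := by
    intro y
    rcases lt_trichotomy y 0 with h | h | h
    · have h1 := hge1 y h
      rw [le_div_iff_of_neg h] at h1
      linarith
    · simp [h, hu0]
    · have h1 := hle1 y h
      rw [div_le_one h] at h1
      exact h1
  -- integrability
  have integ_X : Integrable X μ := by
    refine (integrable_const B).mono' hX.aestronglyMeasurable ?_
    exact ae_of_all _ fun ω => by simpa using hXB ω
  have meas_u : ∀ c d : ℝ, Measurable fun ω => u (c * X ω - d) := fun c d =>
    hu_mono.measurable.comp ((hX.const_mul c).sub measurable_const)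
  have integ_u : ∀ c d : ℝ, Integrable (fun ω => u (c * X ω - d)) μ := by
    intro c d
    set M : ℝ := |c| * B + |d| with hM
    have hMnn : 0 ≤ M := by positivity
    refine (integrable_const (|u M| + |u (-M)|)).mono' (meas_u c d).aestronglyMeasurable ?_
    refine ae_of_all _ fun ω => ?_
    have harg : |c * X ω - d| ≤ M := by
      calc |c * X ω - d| ≤ |c * X ω| + |d| := abs_sub _ _
        _ = |c| * |X ω| + |d| := by rw [abs_mul]
        _ ≤ |c| * B + |d| := by
            have := hXB ω
            nlinarith [abs_nonneg c]
    obtain ⟨hl, hr⟩ := abs_le.mp harg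
    have h1 : u (c * X ω - d) ≤ u M := hu_mono hr
    have h2 : u (-M) ≤ u (c * X ω - d) := hu_mono hl
    rw [Real.norm_eq_abs, abs_le]
    constructor
    · have := neg_abs_le (u (-M)); have := abs_nonneg (u M); linarith
    · have := le_abs_self (u M); have := abs_nonneg (u (-M)); linarith
  -- upper bound on each term
  have hterm_le : ∀ δ η : ℝ, η + ∫ ω, u (δ * X ω - η) ∂μ ≤ δ * ∫ ω, X ω ∂μ := by
    intro δ η
    have h1 : ∫ ω, u (δ * X ω - η) ∂μ ≤ ∫ ω, (δ * X ω - η) ∂μ := by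
      refine integral_mono (integ_u δ η) ((integ_X.const_mul δ).sub (integrable_const η)) ?_
      intro ω; exact u_le _
    have h2 : ∫ ω, (δ * X ω - η) ∂μ = δ * ∫ ω, X ω ∂μ - η := by
      rw [integral_sub (integ_X.const_mul δ) (integrable_const η), integral_const_mul,
        integral_const]
      simp
    linarith
  have hbdd : ∀ δ : ℝ, BddAbove (Set.range fun η : ℝ => η + ∫ ω, u (δ * X ω - η) ∂μ) := by
    intro δ
    exact ⟨δ * ∫ ω, X ω ∂μ, by rintro _ ⟨η, rfl⟩; exact hterm_le δ η⟩
  have hS_le : ∀ δ : ℝ, (⨆ η : ℝ, η + ∫ ω, u (δ * X ω - η) ∂μ) ≤ δ * ∫ ω, X ω ∂μ :=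
    fun δ => ciSup_le (hterm_le δ)
  have hS_ge : ∀ δ : ℝ, (∫ ω, u (δ * X ω) ∂μ) ≤ ⨆ η : ℝ, η + ∫ ω, u (δ * X ω - η) ∂μ := by
    intro δ
    have h := le_ciSup (hbdd δ) 0
    simpa using h
  -- pointwise lower bound
  have key : ∀ δ : ℝ, 0 < δ → ∀ ω,
      δ * X ω - ((1 - u (δ * B) / (δ * B)) + (u (-(δ * B)) / (-(δ * B)) - 1)) * (δ * B)
        ≤ u (δ * X ω) := by
    intro δ hδ ω
    have hδB : 0 < δ * B := by positivity
    have ha : u (δ * B) / (δ * B) ≤ 1 := hle1 _ hδB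
    have hb : 1 ≤ u (-(δ * B)) / (-(δ * B)) := hge1 _ (by linarith)
    obtain ⟨hx1, hx2⟩ := abs_le.mp (hXB ω)
    rcases lt_trichotomy (X ω) 0 with hx | hx | hx
    · have hne : δ * X ω < 0 := mul_neg_of_pos_of_neg hδ hx
      have hle' : -(δ * B) ≤ δ * X ω := by nlinarith
      have hs : u (δ * X ω) / (δ * X ω) ≤ u (-(δ * B)) / (-(δ * B)) :=
        hanti _ _ (by linarith) (ne_of_lt hne) hle'
      have h1 : u (-(δ * B)) / (-(δ * B)) * (δ * X ω) ≤ u (δ * X ω) := by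
        have := mul_le_mul_of_nonpos_right hs (le_of_lt hne)
        rwa [div_mul_cancel₀ _ (ne_of_lt hne)] at this
      nlinarith [mul_nonneg (sub_nonneg.mpr ha) hδB.le,
        mul_le_mul_of_nonneg_left hle' (sub_nonneg.mpr hb)]
    · simp only [hx, mul_zero, hu0]
      nlinarith [mul_nonneg (sub_nonneg.mpr ha) hδB.le,
        mul_nonneg (sub_nonneg.mpr hb) hδB.le]
    · have hne : 0 < δ * X ω := mul_pos hδ hx
      have hle' : δ * X ω ≤ δ * B := by nlinarith
      have hs : u (δ * B) / (δ * B) ≤ u (δ * X ω) / (δ * X ω) :=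
        hanti _ _ (ne_of_gt hne) (ne_of_gt hδB) hle'
      have h1 : u (δ * B) / (δ * B) * (δ * X ω) ≤ u (δ * X ω) := by
        have := mul_le_mul_of_nonneg_right hs (le_of_lt hne)
        rwa [div_mul_cancel₀ _ (ne_of_gt hne)] at this
      nlinarith [mul_nonneg (sub_nonneg.mpr hb) hδB.le,
        mul_le_mul_of_nonneg_left hle' (sub_nonneg.mpr ha)]
  -- bounds on L
  have hL_le : ∀ δ ∈ Set.Ioi (0:ℝ),
      (1 / δ) * (⨆ η : ℝ, η + ∫ ω, u (δ * X ω - η) ∂μ) ≤ ∫ ω, X ω ∂μ := by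
    intro δ hδ
    have hδ' : (0:ℝ) < δ := hδ
    have := mul_le_mul_of_nonneg_left (hS_le δ) (by positivity : (0:ℝ) ≤ 1 / δ)
    calc (1 / δ) * (⨆ η : ℝ, η + ∫ ω, u (δ * X ω - η) ∂μ)
        ≤ (1 / δ) * (δ * ∫ ω, X ω ∂μ) := this
      _ = ∫ ω, X ω ∂μ := by field_simp
  have hL_ge : ∀ δ ∈ Set.Ioi (0:ℝ),
      (∫ ω, X ω ∂μ) - ((1 - u (δ * B) / (δ * B)) + (u (-(δ * B)) / (-(δ * B)) - 1)) * B
        ≤ (1 / δ) * ⨆ η : ℝ, η + ∫ ω, u (δ * X ω - η) ∂μ := by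
    intro δ hδ
    have hδ' : (0:ℝ) < δ := hδ
    set c : ℝ := (1 - u (δ * B) / (δ * B)) + (u (-(δ * B)) / (-(δ * B)) - 1) with hc
    have h1 : ∫ ω, (δ * X ω - c * (δ * B)) ∂μ ≤ ∫ ω, u (δ * X ω) ∂μ := by
      refine integral_mono ((integ_X.const_mul δ).sub (integrable_const _)) ?_ (key δ hδ' ·)
      simpa using integ_u δ 0
    have h2 : ∫ ω, (δ * X ω - c * (δ * B)) ∂μ = δ * ∫ ω, X ω ∂μ - c * (δ * B) := by
      rw [integral_sub (integ_X.const_mul δ) (integrable_const _), integral_const_mul,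
        integral_const]
      simp
    have h3 := hS_ge δ
    have h4 : δ * ∫ ω, X ω ∂μ - c * (δ * B)
        ≤ ⨆ η : ℝ, η + ∫ ω, u (δ * X ω - η) ∂μ := by linarith
    calc (∫ ω, X ω ∂μ) - c * B
        = (1 / δ) * (δ * ∫ ω, X ω ∂μ - c * (δ * B)) := by field_simp
      _ ≤ (1 / δ) * ⨆ η : ℝ, η + ∫ ω, u (δ * X ω - η) ∂μ :=
          mul_le_mul_of_nonneg_left h4 (by positivity)
  -- limits of the bound functions
  have hmul : Tendsto (fun δ : ℝ => δ * B) (𝓝[>] 0) (𝓝[≠] 0) := by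
    apply tendsto_nhdsWithin_of_tendsto_nhds_of_eventually_within
    · have : Tendsto (fun δ : ℝ => δ * B) (𝓝 0) (𝓝 (0 * B)) :=
        (continuous_id.mul continuous_const).tendsto 0
      simpa using this.mono_left nhdsWithin_le_nhds
    · filter_upwards [self_mem_nhdsWithin] with δ hδ
      simp only [Set.mem_compl_iff, Set.mem_singleton_iff]
      exact (mul_pos hδ hB).ne'
  have hmulneg : Tendsto (fun δ : ℝ => -(δ * B)) (𝓝[>] 0) (𝓝[≠] 0) := by
    apply tendsto_nhdsWithin_of_tendsto_nhds_of_eventually_within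
    · have : Tendsto (fun δ : ℝ => -(δ * B)) (𝓝 0) (𝓝 (-(0 * B))) :=
        ((continuous_id.mul continuous_const).neg).tendsto 0
      simpa using this.mono_left nhdsWithin_le_nhds
    · filter_upwards [self_mem_nhdsWithin] with δ hδ
      simp only [Set.mem_compl_iff, Set.mem_singleton_iff]
      have := (mul_pos hδ hB).ne'
      simpa using this
  have ha_t : Tendsto (fun δ : ℝ => u (δ * B) / (δ * B)) (𝓝[>] 0) (𝓝 1) := hslope.comp hmul
  have hb_t : Tendsto (fun δ : ℝ => u (-(δ * B)) / (-(δ * B))) (𝓝[>] 0) (𝓝 1) :=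
    hslope.comp hmulneg
  have hlow : Tendsto (fun δ : ℝ =>
      (∫ ω, X ω ∂μ) - ((1 - u (δ * B) / (δ * B)) + (u (-(δ * B)) / (-(δ * B)) - 1)) * B)
      (𝓝[>] 0) (𝓝 (∫ ω, X ω ∂μ)) := by
    have h1 : Tendsto (fun δ : ℝ => (1 - u (δ * B) / (δ * B))
        + (u (-(δ * B)) / (-(δ * B)) - 1)) (𝓝[>] 0) (𝓝 ((1 - 1) + (1 - 1))) :=
      ((tendsto_const_nhds (x := (1:ℝ))).sub ha_t).add (hb_t.sub tendsto_const_nhds)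
    have h2 : Tendsto (fun δ : ℝ =>
        (∫ ω, X ω ∂μ) - ((1 - u (δ * B) / (δ * B)) + (u (-(δ * B)) / (-(δ * B)) - 1)) * B)
        (𝓝[>] 0) (𝓝 ((∫ ω, X ω ∂μ) - ((1 - 1) + (1 - 1)) * B)) :=
      tendsto_const_nhds.sub (h1.mul_const B)
    simpa using h2
  refine tendsto_of_tendsto_of_tendsto_of_le_of_le' hlow tendsto_const_nhds ?_ ?_
  · filter_upwards [self_mem_nhdsWithin] with δ hδ
    exact hL_ge δ hδ
  · filter_upwards [self_mem_nhdsWithin] with δ hδ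
    exact hL_le δ hδ
end

section
/- Hardy–Littlewood Abelian-type inequality: for every bounded sequence (R_k)_{k≥0} of real numbers, liminf_{n→∞} (1/n) Σ_{k=0}^{n-1} R_k ≤ liminf_{β→1-} (1-β) Σ_{k=0}^{∞} β^k R_k. -/
/-!
Write `S n = ∑_{k<n} R k`. Multiplying the Abel mean by the geometric series (a Cauchy product)
gives `(1 - β) ∑ β^k R k = ∑ w_β(k) · S (k+1) / (k+1)` with the weights
`w_β(k) = (1 - β)^2 (k+1) β^k`. These are nonnegative, sum to `1`, and each tends to `0` as
`β → 1⁻`, so the Abel mean is a regular (Toeplitz) average of the Cesàro means, and such an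
average cannot push the `liminf` down: beyond some index the Cesàro means exceed any
`x < liminf`, and the finitely many earlier ones carry vanishing weight.
-/

open Filter Finset Topology

theorem abs_one_div_mul_sum_range_le {R : ℕ → ℝ} {C : ℝ} (hR : ∀ k, |R k| ≤ C) (n : ℕ) :
    |1 / (n : ℝ) * ∑ k ∈ range n, R k| ≤ C := by
  rcases Nat.eq_zero_or_pos n with rfl | hn
  · simpa using (abs_nonneg _).trans (hR 0)
  have hsum : |∑ k ∈ range n, R k| ≤ n * C := by
    simpa using (abs_sum_le_sum_abs R (range n)).trans (sum_le_sum fun k _ => hR k)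
  rwa [abs_mul, abs_of_nonneg (by positivity), one_div, inv_mul_le_iff₀ (by positivity)]

theorem summable_norm_mul_of_abs_le {w a : ℕ → ℝ} {C : ℝ} (hw : ∀ k, 0 ≤ w k)
    (hws : Summable w) (ha : ∀ k, |a k| ≤ C) : Summable fun k => ‖w k * a k‖ :=
  (hws.mul_right C).of_nonneg_of_le (fun k => norm_nonneg _) fun k => by
    rw [Real.norm_eq_abs, abs_mul, abs_of_nonneg (hw k)]
    exact mul_le_mul_of_nonneg_left (ha k) (hw k)

theorem le_liminf_tsum_mul_of_tendsto_zero {ι : Type*} {l : Filter ι} [l.NeBot]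
    {w : ι → ℕ → ℝ} {a : ℕ → ℝ} {C : ℝ}
    (hw : ∀ᶠ i in l, (∀ k, 0 ≤ w i k) ∧ HasSum (w i) 1)
    (hw_zero : ∀ k, Tendsto (fun i => w i k) l (𝓝 0)) (ha : ∀ k, |a k| ≤ C) :
    liminf a atTop ≤ liminf (fun i => ∑' k, w i k * a k) l := by
  refine le_of_forall_lt_imp_le_of_dense fun x hx => ?_
  obtain ⟨N, hN⟩ := eventually_atTop.1 <| eventually_lt_of_lt_liminf hx <|
    isBoundedUnder_of_eventually_ge (.of_forall fun k => neg_le_of_abs_le (ha k))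
  -- only the first `N` terms can fall below `x`, and their weights vanish in the limit
  have hx_err : Tendsto (fun i => x + ∑ k ∈ range N, w i k * (a k - x)) l (𝓝 x) := by
    simpa using tendsto_const_nhds.add
      (tendsto_finsetSum (range N) fun k _ => (hw_zero k).mul_const (a k - x))
  have hmean : ∀ᶠ i in l, x + ∑ k ∈ range N, w i k * (a k - x) ≤ ∑' k, w i k * a k ∧
      ∑' k, w i k * a k ≤ C := by
    filter_upwards [hw] with i ⟨hw_nonneg, hw_sum⟩
    have hwa := (summable_norm_mul_of_abs_le hw_nonneg hw_sum.summable ha).of_norm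
    have hwx : HasSum (fun k => w i k * x) x := by simpa using hw_sum.mul_right x
    constructor
    · have htail : ∀ k ∉ range N, 0 ≤ w i k * a k - w i k * x := fun k hk => by
        rw [← mul_sub]
        exact mul_nonneg (hw_nonneg k) (sub_nonneg.2 (hN k (by simpa using hk)).le)
      have := (hwa.sub hwx.summable).sum_le_tsum (range N) htail
      rw [hwa.tsum_sub hwx.summable, hwx.tsum_eq] at this
      simp only [mul_sub] at this ⊢
      linarith
    · have hwC : HasSum (fun k => w i k * C) C := by simpa using hw_sum.mul_right C
      rw [← hwC.tsum_eq]
      exact hwa.tsum_le_tsum (fun k => mul_le_mul_of_nonneg_left (le_of_abs_le (ha k))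
        (hw_nonneg k)) hwC.summable
  calc x = liminf (fun i => x + ∑ k ∈ range N, w i k * (a k - x)) l := hx_err.liminf_eq.symm
    _ ≤ liminf (fun i => ∑' k, w i k * a k) l :=
      liminf_le_liminf (hmean.mono fun _ h => h.1) hx_err.isBoundedUnder_ge
        (isBoundedUnder_of_eventually_le (hmean.mono fun _ h => h.2)).isCoboundedUnder_ge

theorem one_sub_mul_tsum_pow_mul_sum_range_succ {𝕜 : Type*} [NormedField 𝕜] [CompleteSpace 𝕜]
    {β : 𝕜} (hβ : ‖β‖ < 1) {R : ℕ → 𝕜} (hR : Summable fun k => ‖β ^ k * R k‖) :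
    (1 - β) * ∑' n, β ^ n * ∑ k ∈ range (n + 1), R k = ∑' k, β ^ k * R k := by
  have hcauchy := tsum_mul_tsum_eq_tsum_sum_range_of_summable_norm hR
    (summable_norm_geometric_of_norm_lt_one hβ)
  have hterm : ∀ n, ∑ k ∈ range (n + 1), β ^ k * R k * β ^ (n - k) =
      β ^ n * ∑ k ∈ range (n + 1), R k := fun n => by
    rw [mul_sum]
    refine sum_congr rfl fun k hk => ?_
    rw [mul_right_comm, pow_mul_pow_sub β (Nat.lt_succ_iff.1 (mem_range.1 hk)), mul_comm]
  have hβ1 : 1 - β ≠ 0 := sub_ne_zero.2 fun h => by simp [← h] at hβ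
  rw [tsum_geometric_of_norm_lt_one hβ, funext hterm] at hcauchy
  rw [← hcauchy]
  field_simp

def abelWeight (β : ℝ) (k : ℕ) : ℝ := (1 - β) ^ 2 * ((k + 1) * β ^ k)

theorem abelWeight_nonneg {β : ℝ} (hβ : 0 ≤ β) (k : ℕ) : 0 ≤ abelWeight β k := by
  unfold abelWeight; positivity

theorem hasSum_abelWeight {β : ℝ} (hβ : |β| < 1) : HasSum (abelWeight β) 1 := by
  have hβ1 : (1 - β) ^ 2 ≠ 0 := pow_ne_zero 2 (by linarith [le_abs_self β])
  have h := (hasSum_choose_mul_geometric_of_norm_lt_one 1 (r := β)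
    (by rwa [Real.norm_eq_abs])).mul_left ((1 - β) ^ 2)
  simp only [Nat.choose_one_right, Nat.cast_add, Nat.cast_one, one_add_one_eq_two] at h
  rwa [mul_one_div_cancel hβ1] at h

theorem tendsto_abelWeight_zero (k : ℕ) : Tendsto (fun β => abelWeight β k) (𝓝 1) (𝓝 0) := by
  have : Continuous fun β => abelWeight β k := by unfold abelWeight; fun_prop
  simpa [abelWeight] using this.tendsto 1

theorem tsum_abelWeight_mul_average {β : ℝ} (hβ0 : 0 ≤ β) (hβ1 : β < 1) {R : ℕ → ℝ} {C : ℝ}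
    (hR : ∀ k, |R k| ≤ C) :
    ∑' k, abelWeight β k * (1 / ((k + 1 : ℕ) : ℝ) * ∑ j ∈ range (k + 1), R j) =
      (1 - β) * ∑' k, β ^ k * R k := by
  have hβ : ‖β‖ < 1 := by rwa [Real.norm_eq_abs, abs_of_nonneg hβ0]
  have hterm : ∀ k : ℕ, abelWeight β k * (1 / ((k + 1 : ℕ) : ℝ) * ∑ j ∈ range (k + 1), R j) =
      (1 - β) * ((1 - β) * (β ^ k * ∑ j ∈ range (k + 1), R j)) := fun k => by
    unfold abelWeight; field_simp; push_cast; ring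
  rw [tsum_congr hterm, tsum_mul_left, tsum_mul_left, one_sub_mul_tsum_pow_mul_sum_range_succ hβ
    (summable_norm_mul_of_abs_le (fun k => pow_nonneg hβ0 k)
      (summable_geometric_of_lt_one hβ0 hβ1) hR)]

/-- Hardy–Littlewood Abelian-type inequality: for every bounded sequence
`(R k)` of real numbers,
`liminf_{n→∞} (1/n) Σ_{k<n} R k ≤ liminf_{β→1⁻} (1-β) Σ_{k} β^k R k`. -/
theorem hardy_littlewood_abelian
    (R : ℕ → ℝ) (C : ℝ) (hbdd : ∀ k, |R k| ≤ C) :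
    Filter.liminf (fun n : ℕ => (1 / (n : ℝ)) * ∑ k ∈ Finset.range n, R k) Filter.atTop
      ≤ Filter.liminf (fun β : ℝ => (1 - β) * ∑' k : ℕ, β ^ k * R k)
          (nhdsWithin 1 (Set.Iio 1)) := by
  have hweights : ∀ᶠ β in 𝓝[<] (1 : ℝ), (∀ k, 0 ≤ abelWeight β k) ∧ HasSum (abelWeight β) 1 := by
    filter_upwards [Ico_mem_nhdsLT (show (0 : ℝ) < 1 by norm_num)] with β hβ
    exact ⟨abelWeight_nonneg hβ.1, hasSum_abelWeight ((abs_of_nonneg hβ.1).trans_lt hβ.2)⟩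
  calc liminf (fun n : ℕ => 1 / (n : ℝ) * ∑ k ∈ range n, R k) atTop
      = liminf (fun k : ℕ => 1 / ((k + 1 : ℕ) : ℝ) * ∑ j ∈ range (k + 1), R j) atTop :=
        (liminf_nat_add _ 1).symm
    _ ≤ liminf (fun β => ∑' k, abelWeight β k *
          (1 / ((k + 1 : ℕ) : ℝ) * ∑ j ∈ range (k + 1), R j)) (𝓝[<] 1) :=
        le_liminf_tsum_mul_of_tendsto_zero hweights
          (fun k => (tendsto_abelWeight_zero k).mono_left nhdsWithin_le_nhds)
          (fun k => abs_one_div_mul_sum_range_le hbdd (k + 1))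
    _ = liminf (fun β : ℝ => (1 - β) * ∑' k : ℕ, β ^ k * R k) (𝓝[<] 1) := by
        refine liminf_congr ?_
        filter_upwards [Ico_mem_nhdsLT (show (0 : ℝ) < 1 by norm_num)] with β hβ
        exact tsum_abelWeight_mul_average hβ.1 hβ.2 hbdd
end

section
/- The Bellman operator for recursive OCE preferences is a β-contraction in supremum norm: if L v(x) = sup_{a ∈ D(x)} { r(x,a) + β S_u^{(x,a)}(v(X₁)) }, then for bounded functions v₁, v₂, ‖Lv₁ - Lv₂‖_∞ ≤ β ‖v₁ - v₂‖_∞. -/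
/-- The Bellman operator for recursive OCE preferences,
`L v x = sup_{a ∈ D x} { r x a + β · S^{(x,a)}(v) }`, is a `β`-contraction in supremum
norm: for bounded `v₁, v₂` with `|v₁ - v₂| ≤ C` pointwise, `|L v₁ - L v₂| ≤ β C`
pointwise.  The conditional Optimized Certainty Equivalent `S x a : (E → ℝ) → ℝ`
(the OCE of `v(X₁)` with `X₁ ∼ q(·|x,a)`) is assumed monotone and shift additive. -/
theorem oce_bellman_contraction
    {E A : Type*} (D : E → Set A) (hD : ∀ x, (D x).Nonempty)
    (β : ℝ) (hβ0 : 0 ≤ β) (hβ1 : β < 1)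
    (r : E → A → ℝ) (S : E → A → (E → ℝ) → ℝ)
    (hSmono : ∀ x a (v w : E → ℝ), (∀ y, v y ≤ w y) → S x a v ≤ S x a w)
    (hSshift : ∀ x a (v : E → ℝ) (c : ℝ), S x a (fun y => v y + c) = S x a v + c)
    (v₁ v₂ : E → ℝ)
    (hbdd₁ : ∀ x, BddAbove ((fun a => r x a + β * S x a v₁) '' D x))
    (hbdd₂ : ∀ x, BddAbove ((fun a => r x a + β * S x a v₂) '' D x))
    (C : ℝ) (hC : ∀ x, |v₁ x - v₂ x| ≤ C) :
    ∀ x, |sSup ((fun a => r x a + β * S x a v₁) '' D x)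
            - sSup ((fun a => r x a + β * S x a v₂) '' D x)| ≤ β * C := by
  have key : ∀ (w₁ w₂ : E → ℝ),
      (∀ x, BddAbove ((fun a => r x a + β * S x a w₂) '' D x)) →
      (∀ y, w₁ y ≤ w₂ y + C) → ∀ x,
      sSup ((fun a => r x a + β * S x a w₁) '' D x)
        - sSup ((fun a => r x a + β * S x a w₂) '' D x) ≤ β * C := by
    intro w₁ w₂ hbdd hle x
    rw [sub_le_iff_le_add]
    apply csSup_le ((hD x).image _)
    rintro _ ⟨a, ha, rfl⟩
    have h1 : S x a w₁ ≤ S x a w₂ + C := by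
      calc S x a w₁ ≤ S x a (fun y => w₂ y + C) := hSmono x a _ _ hle
        _ = S x a w₂ + C := hSshift x a w₂ C
    have h2 : r x a + β * S x a w₂ ≤ sSup ((fun a => r x a + β * S x a w₂) '' D x) :=
      le_csSup (hbdd x) ⟨a, ha, rfl⟩
    have h3 := mul_le_mul_of_nonneg_left h1 hβ0
    simp only []
    linarith
  intro x
  rw [abs_sub_le_iff]
  constructor
  · exact key v₁ v₂ hbdd₂ (fun y => by have := (abs_le.mp (hC y)).2; linarith) x
  · exact key v₂ v₁ hbdd₁ (fun y => by have := (abs_le.mp (hC y)).1; linarith) x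
end

section
/- CVaR of a continuous random variable as a tail expectation: if X has a continuous distribution function then CVaR_α(X) = E[-X | -X ≥ VaR_α(X)], where VaR_α(X) = inf{c ∈ ℝ : P(X + c < 0) ≤ α} and CVaR_α(X) = inf_η {(1/α)E[(η-X)^+] - η}. -/
/-!
Let `F` be the distribution function of `X`. Since `F` has no jumps, `P(X + c < 0) = F(-c)`, and
the infimum `v` of the closed set `{c | F(-c) ≤ α}` satisfies `F(-v) = α`: at `v` the inequality
holds, just to the left of `v` it fails. With `q = -v`, the pointwise inequality
`(η - x)⁺ ≥ (q - x)⁺ + (η - q) 1{x ≤ q}` integrates to `E(η - X)⁺ ≥ E(q - X)⁺ + (η - q) α`, so the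
Rockafellar–Uryasev objective `η ↦ E(η - X)⁺ / α - η` is minimised at `η = q`, where its value
is `(q α - E[X; X ≤ q]) / α - q = E[-X; X ≤ q] / α`.
-/

open MeasureTheory ProbabilityTheory Set Filter

noncomputable def valueAtRisk {Ω : Type*} [MeasurableSpace Ω] (μ : Measure Ω) (X : Ω → ℝ)
    (α : ℝ) : ℝ :=
  sInf {c : ℝ | (μ {ω | X ω + c < 0}).toReal ≤ α}

noncomputable def conditionalValueAtRisk {Ω : Type*} [MeasurableSpace Ω] (μ : Measure Ω)
    (X : Ω → ℝ) (α : ℝ) : ℝ :=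
  ⨅ η : ℝ, (1 / α) * ∫ ω, max (η - X ω) 0 ∂μ - η

lemma Continuous.apply_sInf_setOf_le_eq {G : ℝ → ℝ} (hG : Continuous G) {α : ℝ}
    (hne : ∃ c, G c ≤ α) (hbdd : BddBelow {c | G c ≤ α}) :
    G (sInf {c | G c ≤ α}) = α := by
  refine le_antisymm ((isClosed_le hG continuous_const).csInf_mem hne hbdd) ?_
  refine ge_of_tendsto
    ((hG.tendsto _).mono_left (nhdsWithin_le_nhds (s := Iio (sInf {c | G c ≤ α})))) ?_
  filter_upwards [self_mem_nhdsWithin] with c hc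
  exact le_of_not_ge fun h => (not_le.2 hc) (csInf_le hbdd h)

lemma cdf_neg_sInf_setOf_cdf_neg_le (ν : Measure ℝ) [IsProbabilityMeasure ν]
    (hcont : Continuous (cdf ν)) {α : ℝ} (hα0 : 0 < α) (hα1 : α < 1) :
    cdf ν (-sInf {c | cdf ν (-c) ≤ α}) = α := by
  refine (hcont.comp continuous_neg).apply_sInf_setOf_le_eq ?_ ?_
  · obtain ⟨x, hx⟩ := ((tendsto_cdf_atBot ν).eventually (gt_mem_nhds hα0)).exists
    exact ⟨-x, by simpa using hx.le⟩
  · obtain ⟨N, hN⟩ := eventually_atTop.1 ((tendsto_cdf_atTop ν).eventually (lt_mem_nhds hα1))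
    refine ⟨-N, fun c hc => ?_⟩
    by_contra! h
    exact (hN (-c) (by linarith)).not_ge hc

lemma measure_singleton_eq_zero_of_continuous_cdf {ν : Measure ℝ} [IsProbabilityMeasure ν]
    (hcont : Continuous (cdf ν)) (t : ℝ) : ν {t} = 0 := by
  rw [← measure_cdf ν, StieltjesFunction.measure_singleton,
    hcont.continuousWithinAt.leftLim_eq, sub_self, ENNReal.ofReal_zero]

section RandomVariable

variable {Ω : Type*} [MeasurableSpace Ω] {μ : Measure Ω} {X : Ω → ℝ}

lemma cdf_map_apply [IsProbabilityMeasure μ] (hX : Measurable X) (c : ℝ) :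
    cdf (μ.map X) c = μ.real {ω | X ω ≤ c} := by
  have := Measure.isProbabilityMeasure_map (μ := μ) hX.aemeasurable
  rw [cdf_eq_real, map_measureReal_apply hX measurableSet_Iic]
  rfl

lemma measureReal_lt_eq_cdf_map [IsProbabilityMeasure μ] (hX : Measurable X)
    (hcont : Continuous (cdf (μ.map X))) (c : ℝ) :
    μ.real {ω | X ω < c} = cdf (μ.map X) c := by
  have := Measure.isProbabilityMeasure_map (μ := μ) hX.aemeasurable
  rw [cdf_eq_real, ← measureReal_congr
      (Iio_ae_eq_Iic' (measure_singleton_eq_zero_of_continuous_cdf hcont c)),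
    map_measureReal_apply hX measurableSet_Iio]
  rfl

lemma valueAtRisk_eq_sInf_cdf [IsProbabilityMeasure μ] (hX : Measurable X)
    (hcont : Continuous (cdf (μ.map X))) (α : ℝ) :
    valueAtRisk μ X α = sInf {c | cdf (μ.map X) (-c) ≤ α} := by
  simp_rw [valueAtRisk, ← measureReal_lt_eq_cdf_map hX hcont, ← measureReal_def,
    ← lt_neg_iff_add_neg]

lemma max_sub_zero_eq_ite (η x : ℝ) : max (η - x) 0 = if x ≤ η then η - x else 0 := by
  split_ifs with h
  · exact max_eq_left (by linarith)
  · exact max_eq_right (by linarith)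

lemma ite_le_max_sub_sub_max_sub (q η x : ℝ) :
    (if x ≤ q then η - q else 0) ≤ max (η - x) 0 - max (q - x) 0 := by
  rw [max_sub_zero_eq_ite q, max_sub_zero_eq_ite η]
  split_ifs <;> linarith

variable [IsFiniteMeasure μ]

lemma integrable_max_sub_zero (hXint : Integrable X μ) (η : ℝ) :
    Integrable (fun ω => max (η - X ω) 0) μ :=
  ((integrable_const η).sub hXint).pos_part

lemma integral_max_sub_zero (hX : Measurable X) (hXint : Integrable X μ) (η : ℝ) :
    ∫ ω, max (η - X ω) 0 ∂μ = η * μ.real {ω | X ω ≤ η} - ∫ ω in {ω | X ω ≤ η}, X ω ∂μ := by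
  have hη : MeasurableSet {ω | X ω ≤ η} := measurableSet_le hX measurable_const
  calc ∫ ω, max (η - X ω) 0 ∂μ = ∫ ω, {ω | X ω ≤ η}.indicator (fun ω => η - X ω) ω ∂μ := by
        simp_rw [max_sub_zero_eq_ite η]
        rfl
    _ = η * μ.real {ω | X ω ≤ η} - ∫ ω in {ω | X ω ≤ η}, X ω ∂μ := by
        rw [integral_indicator hη, integral_sub (integrable_const η) hXint.integrableOn,
          setIntegral_const, smul_eq_mul, mul_comm]

lemma sub_mul_measureReal_le_integral_max_sub (hX : Measurable X) (hXint : Integrable X μ)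
    (q η : ℝ) :
    (η - q) * μ.real {ω | X ω ≤ q}
      ≤ ∫ ω, max (η - X ω) 0 ∂μ - ∫ ω, max (q - X ω) 0 ∂μ := by
  rw [← integral_sub (integrable_max_sub_zero hXint η) (integrable_max_sub_zero hXint q), mul_comm,
    ← smul_eq_mul, ← integral_indicator_const _ (measurableSet_le hX measurable_const)]
  refine integral_mono ((integrable_const _).indicator (measurableSet_le hX measurable_const))
    ((integrable_max_sub_zero hXint η).sub (integrable_max_sub_zero hXint q)) fun ω => ?_
  simpa [indicator_apply] using ite_le_max_sub_sub_max_sub q η (X ω)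

theorem conditionalValueAtRisk_eq_setIntegral (hX : Measurable X) (hXint : Integrable X μ)
    {α q : ℝ} (hα : 0 < α) (hq : μ.real {ω | X ω ≤ q} = α) :
    conditionalValueAtRisk μ X α = α⁻¹ * ∫ ω in {ω | X ω ≤ q}, -X ω ∂μ := by
  have hmin : IsLeast (range fun η => (1 / α) * ∫ ω, max (η - X ω) 0 ∂μ - η)
      ((1 / α) * ∫ ω, max (q - X ω) 0 ∂μ - q) := by
    refine ⟨⟨q, rfl⟩, ?_⟩
    rintro _ ⟨η, rfl⟩
    have := sub_mul_measureReal_le_integral_max_sub hX hXint q η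
    rw [hq, ← le_div_iff₀ hα, sub_div] at this
    simp only [one_div_mul_eq_div]
    linarith
  rw [conditionalValueAtRisk, hmin.isGLB.ciInf_eq, integral_max_sub_zero hX hXint, hq, integral_neg]
  field_simp
  ring

end RandomVariable

/-- CVaR of a random variable with continuous distribution function as a
tail expectation: `CVaR_α(X) = E[-X | -X ≥ VaR_α(X)]`, where
`VaR_α(X) = inf {c : P(X + c < 0) ≤ α}` and
`CVaR_α(X) = inf_η {(1/α) E[(η - X)⁺] - η}`.  The conditional expectation is written as
the normalized integral over the event `{-X ≥ VaR_α(X)}`. -/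
theorem cvar_tail_expectation
    {Ω : Type*} [MeasurableSpace Ω] (μ : Measure Ω) [IsProbabilityMeasure μ]
    (X : Ω → ℝ) (hX : Measurable X) (hXint : Integrable X μ)
    (hcdf : Continuous fun c : ℝ => (μ {ω | X ω ≤ c}).toReal)
    (α : ℝ) (hα0 : 0 < α) (hα1 : α < 1) :
    (⨅ η : ℝ, ((1 / α) * ∫ ω, max (η - X ω) 0 ∂μ - η))
      = (μ {ω | -X ω ≥ sInf {c : ℝ | (μ {ω | X ω + c < 0}).toReal ≤ α}}).toReal⁻¹
          * ∫ ω in {ω | -X ω ≥ sInf {c : ℝ | (μ {ω | X ω + c < 0}).toReal ≤ α}},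
              (-X ω) ∂μ := by
  have := Measure.isProbabilityMeasure_map (μ := μ) hX.aemeasurable
  have hcont : Continuous (cdf (μ.map X)) := by
    convert hcdf using 1
    exact funext (cdf_map_apply hX)
  have hVaR : μ.real {ω | X ω ≤ -valueAtRisk μ X α} = α := by
    rw [← cdf_map_apply hX, valueAtRisk_eq_sInf_cdf hX hcont]
    exact cdf_neg_sInf_setOf_cdf_neg_le _ hcont hα0 hα1
  have htail : {ω | -X ω ≥ valueAtRisk μ X α} = {ω | X ω ≤ -valueAtRisk μ X α} :=
    Set.ext fun _ => le_neg (α := ℝ)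
  show conditionalValueAtRisk μ X α = (μ {ω | -X ω ≥ valueAtRisk μ X α}).toReal⁻¹
    * ∫ ω in {ω | -X ω ≥ valueAtRisk μ X α}, -X ω ∂μ
  rw [htail, ← measureReal_def, hVaR]
  exact conditionalValueAtRisk_eq_setIntegral hX hXint hα0 hVaR
end

section
/- CVaR as average of VaR: for α ∈ (0,1) and integrable X, CVaR_α(X) = (1/α) ∫₀^α VaR_γ(X) dγ, where VaR_γ(X) = inf{c ∈ ℝ : P(X + c < 0) ≤ γ} and CVaR_α(X) = inf_η {(1/α)E[(η-X)^+] - η}. -/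
/-!
Write `F t = P(X < t)` and `q γ = sup {t | F t ≤ γ}`, so that `VaR_γ(X) = -q γ`. Since `F` is
left-continuous, `q γ < t ↔ γ < F t` for `0 < γ < 1`; hence under Lebesgue measure on `(0, α)`
the event `{q < t}` has measure `min α (F t)`, which is at most `P(X < t)` and equal to it for
`t ≤ q α`. The layer-cake formula `E (η - Y)⁺ = ∫_{t < η} P(Y < t) dt` then gives
`∫_{(0,α)} (η - q)⁺ ≤ E (η - X)⁺` for every `η`, with equality at `η = q α`. Dropping the
positive part on the left bounds every term of the CVaR infimum below by `-(1/α) ∫_{(0,α)} q`,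
and `η = q α` attains this bound.
-/

open MeasureTheory Set Filter Topology

theorem monotone_setOf_lt {Ω : Type*} (X : Ω → ℝ) : Monotone fun t => {ω | X ω < t} :=
  fun _ _ hst _ h => lt_of_lt_of_le h hst

namespace MeasureTheory

variable {α : Type*} [MeasurableSpace α] (ν : Measure α) {Y : α → ℝ}

theorem lintegral_ofReal_sub_eq_setLIntegral_measure_lt (hY : AEMeasurable Y ν) (η : ℝ) :
    ∫⁻ a, ENNReal.ofReal (η - Y a) ∂ν = ∫⁻ t in Iio η, ν {a | Y a < t} := by
  have hpos : ∀ a, ENNReal.ofReal (η - Y a) = ENNReal.ofReal (max (η - Y a) 0) := by simp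
  have hslice : ∀ s ∈ Ioi (0 : ℝ), ν {a | s < max (η - Y a) 0} = ν {a | Y a < η - s} := by
    intro s hs
    congr 1
    ext a
    simp only [mem_ofPred_eq, lt_max_iff, not_lt_of_gt (mem_Ioi.mp hs), or_false]
    constructor <;> intro h <;> linarith
  have hmono : Monotone fun t => ν {a | Y a < t} := fun _ _ hst =>
    measure_mono (monotone_setOf_lt Y hst)
  simp_rw [hpos]
  rw [lintegral_eq_lintegral_meas_lt ν (.of_forall fun a => le_max_right _ 0)
    ((hY.const_sub η).max aemeasurable_const), setLIntegral_congr_fun measurableSet_Ioi hslice,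
    ← (Measure.measurePreserving_sub_left volume η).setLIntegral_comp_preimage measurableSet_Iio
      hmono.measurable, preimage_const_sub_Iio, sub_self]

theorem integral_max_sub_zero_eq_toReal (hY : AEMeasurable Y ν) (η : ℝ) :
    ∫ a, max (η - Y a) 0 ∂ν = (∫⁻ a, ENNReal.ofReal (η - Y a) ∂ν).toReal := by
  rw [integral_eq_lintegral_of_nonneg_ae (.of_forall fun a => le_max_right _ 0)
    ((hY.const_sub η).max aemeasurable_const).aestronglyMeasurable]
  simp

end MeasureTheory

namespace ProbabilityTheory

variable {Ω : Type*} [MeasurableSpace Ω] (μ : Measure Ω) (X : Ω → ℝ)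

noncomputable def leftCdf (t : ℝ) : ℝ := (μ {ω | X ω < t}).toReal

noncomputable def upperQuantile (γ : ℝ) : ℝ := sSup {t | leftCdf μ X t ≤ γ}

variable {μ X}

theorem sInf_setOf_measure_add_lt_zero_le_eq_neg_upperQuantile (γ : ℝ) :
    sInf {c : ℝ | (μ {ω | X ω + c < 0}).toReal ≤ γ} = -upperQuantile μ X γ := by
  have hneg : -{c : ℝ | (μ {ω | X ω + c < 0}).toReal ≤ γ} = {t | leftCdf μ X t ≤ γ} := by
    ext t
    simp [leftCdf, ← sub_eq_add_neg, sub_neg]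
  rw [Real.sInf_def, hneg, upperQuantile]

theorem leftCdf_mono [IsFiniteMeasure μ] : Monotone (leftCdf μ X) := fun _ _ hst =>
  ENNReal.toReal_mono (measure_ne_top μ _) (measure_mono (monotone_setOf_lt X hst))

theorem tendsto_leftCdf_atBot [IsFiniteMeasure μ] (hX : Measurable X) :
    Tendsto (leftCdf μ X) atBot (𝓝 0) := by
  have hinter : ⋂ t : ℝ, {ω | X ω < t} = ∅ :=
    eq_empty_of_forall_notMem fun ω hω => lt_irrefl (X ω) (mem_iInter.mp hω (X ω))
  have := tendsto_measure_iInter_atBot (μ := μ) (s := fun t => {ω | X ω < t})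
    (fun _ => (hX measurableSet_Iio).nullMeasurableSet) (monotone_setOf_lt X)
    ⟨0, measure_ne_top μ _⟩
  rw [hinter, measure_empty] at this
  exact ENNReal.toReal_zero ▸ (ENNReal.tendsto_toReal ENNReal.zero_ne_top).comp this

theorem tendsto_leftCdf_atTop [IsProbabilityMeasure μ] : Tendsto (leftCdf μ X) atTop (𝓝 1) := by
  have hunion : ⋃ t : ℝ, {ω | X ω < t} = univ :=
    eq_univ_of_forall fun ω => mem_iUnion.mpr ⟨X ω + 1, by simp⟩
  have := tendsto_measure_iUnion_atTop (μ := μ) (monotone_setOf_lt X)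
  rw [hunion, measure_univ] at this
  exact ENNReal.toReal_one ▸ (ENNReal.tendsto_toReal ENNReal.one_ne_top).comp this

theorem exists_lt_leftCdf_of_lt_leftCdf [IsFiniteMeasure μ] {γ t : ℝ} (h : γ < leftCdf μ X t) :
    ∃ s < t, γ < leftCdf μ X s := by
  set s : ℕ → ℝ := fun n => t - 1 / (n + 1)
  have hst : ∀ n, s n < t := fun n => sub_lt_self t Nat.one_div_pos_of_nat
  have hunion : ⋃ n, {ω | X ω < s n} = {ω | X ω < t} := by
    ext ω
    simp only [mem_iUnion, mem_ofPred_eq]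
    refine ⟨fun ⟨n, hn⟩ => hn.trans (hst n), fun hω => ?_⟩
    obtain ⟨n, hn⟩ := exists_nat_one_div_lt (sub_pos.mpr hω)
    exact ⟨n, by simp only [s]; linarith⟩
  have := tendsto_measure_iUnion_atTop (μ := μ) (s := fun n => {ω | X ω < s n})
    ((monotone_setOf_lt X).comp fun m n hmn => by simp only [s]; gcongr)
  rw [hunion] at this
  obtain ⟨n, hn⟩ :=
    (((ENNReal.tendsto_toReal (measure_ne_top μ _)).comp this).eventually_const_lt h).exists
  exact ⟨s n, hst n, hn⟩

theorem exists_leftCdf_le [IsFiniteMeasure μ] (hX : Measurable X) {γ : ℝ} (hγ : 0 < γ) :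
    ∃ t, leftCdf μ X t ≤ γ :=
  ((tendsto_leftCdf_atBot hX).eventually_le_const hγ).exists

theorem bddAbove_setOf_leftCdf_le [IsProbabilityMeasure μ] {γ : ℝ} (hγ : γ < 1) :
    BddAbove {t | leftCdf μ X t ≤ γ} := by
  obtain ⟨T, hT⟩ :=
    ((tendsto_leftCdf_atTop (μ := μ) (X := X)).eventually_const_lt hγ).exists_forall_of_atTop
  exact ⟨T, fun t ht => le_of_not_gt fun hTt => (hT t hTt.le).not_ge ht⟩

theorem upperQuantile_lt_iff [IsProbabilityMeasure μ] (hX : Measurable X) {γ t : ℝ} (hγ0 : 0 < γ)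
    (hγ1 : γ < 1) : upperQuantile μ X γ < t ↔ γ < leftCdf μ X t := by
  constructor
  · intro h
    by_contra! ht
    exact h.not_ge (le_csSup (bddAbove_setOf_leftCdf_le hγ1) ht)
  · intro h
    obtain ⟨s, hst, hs⟩ := exists_lt_leftCdf_of_lt_leftCdf h
    obtain ⟨r, hr⟩ := exists_leftCdf_le (μ := μ) hX hγ0
    refine lt_of_le_of_lt (csSup_le ⟨r, hr⟩ fun r (hr : leftCdf μ X r ≤ γ) => ?_) hst
    exact le_of_lt (leftCdf_mono.reflect_lt (hr.trans_lt hs))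

theorem upperQuantile_monotoneOn [IsProbabilityMeasure μ] (hX : Measurable X) :
    MonotoneOn (upperQuantile μ X) (Ioo 0 1) := fun _ h₁ _ h₂ h₁₂ =>
  le_of_forall_gt fun _ ht => (upperQuantile_lt_iff hX h₁.1 h₁.2).mpr <|
    h₁₂.trans_lt ((upperQuantile_lt_iff hX h₂.1 h₂.2).mp ht)

theorem volume_restrict_setOf_upperQuantile_lt [IsProbabilityMeasure μ] (hX : Measurable X)
    {α : ℝ} (hα : α ≤ 1) (t : ℝ) :
    volume.restrict (Ioo 0 α) {γ | upperQuantile μ X γ < t}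
      = ENNReal.ofReal (min α (leftCdf μ X t)) := by
  have hset : {γ | upperQuantile μ X γ < t} ∩ Ioo 0 α = Ioo 0 (min α (leftCdf μ X t)) := by
    ext γ
    simp only [mem_inter_iff, mem_ofPred_eq, mem_Ioo, lt_min_iff]
    constructor
    · rintro ⟨hq, hγ0, hγα⟩
      exact ⟨hγ0, hγα, (upperQuantile_lt_iff hX hγ0 (hγα.trans_le hα)).mp hq⟩
    · rintro ⟨hγ0, hγα, hγF⟩
      exact ⟨(upperQuantile_lt_iff hX hγ0 (hγα.trans_le hα)).mpr hγF, hγ0, hγα⟩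
  rw [Measure.restrict_apply' measurableSet_Ioo, hset, Real.volume_Ioo, sub_zero]

theorem aemeasurable_upperQuantile [IsProbabilityMeasure μ] (hX : Measurable X) {α : ℝ}
    (hα : α ≤ 1) : AEMeasurable (upperQuantile μ X) (volume.restrict (Ioo 0 α)) :=
  aemeasurable_restrict_of_monotoneOn measurableSet_Ioo
    ((upperQuantile_monotoneOn hX).mono (Ioo_subset_Ioo_right hα))

theorem setLIntegral_ofReal_sub_upperQuantile_le [IsProbabilityMeasure μ] (hX : Measurable X)
    {α : ℝ} (hα : α ≤ 1) (η : ℝ) :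
    ∫⁻ γ in Ioo 0 α, ENNReal.ofReal (η - upperQuantile μ X γ)
      ≤ ∫⁻ ω, ENNReal.ofReal (η - X ω) ∂μ := by
  rw [lintegral_ofReal_sub_eq_setLIntegral_measure_lt _ (aemeasurable_upperQuantile hX hα),
    lintegral_ofReal_sub_eq_setLIntegral_measure_lt _ hX.aemeasurable]
  refine lintegral_mono fun t => ?_
  rw [volume_restrict_setOf_upperQuantile_lt hX hα, ← ENNReal.ofReal_toReal (measure_ne_top μ _)]
  exact ENNReal.ofReal_le_ofReal (min_le_right _ _)

theorem setLIntegral_ofReal_upperQuantile_sub_eq [IsProbabilityMeasure μ] (hX : Measurable X)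
    {α : ℝ} (hα0 : 0 < α) (hα1 : α < 1) :
    ∫⁻ γ in Ioo 0 α, ENNReal.ofReal (upperQuantile μ X α - upperQuantile μ X γ)
      = ∫⁻ ω, ENNReal.ofReal (upperQuantile μ X α - X ω) ∂μ := by
  rw [lintegral_ofReal_sub_eq_setLIntegral_measure_lt _ (aemeasurable_upperQuantile hX hα1.le),
    lintegral_ofReal_sub_eq_setLIntegral_measure_lt _ hX.aemeasurable]
  refine setLIntegral_congr_fun measurableSet_Iio fun t ht => ?_
  have hFt : leftCdf μ X t ≤ α :=
    le_of_not_gt fun h => lt_asymm ht ((upperQuantile_lt_iff hX hα0 hα1).mpr h)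
  rw [volume_restrict_setOf_upperQuantile_lt hX hα1.le, min_eq_right hFt, leftCdf,
    ENNReal.ofReal_toReal (measure_ne_top μ _)]

theorem upperQuantile_le_of_mem_Ioo [IsProbabilityMeasure μ] (hX : Measurable X) {α γ : ℝ}
    (hα1 : α < 1) (hγ : γ ∈ Ioo 0 α) : upperQuantile μ X γ ≤ upperQuantile μ X α :=
  upperQuantile_monotoneOn hX ⟨hγ.1, hγ.2.trans hα1⟩ ⟨hγ.1.trans hγ.2, hα1⟩ hγ.2.le

theorem setIntegral_upperQuantile_sub_eq [IsProbabilityMeasure μ] (hX : Measurable X) {α : ℝ}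
    (hα0 : 0 < α) (hα1 : α < 1) :
    ∫ γ in Ioo 0 α, (upperQuantile μ X α - upperQuantile μ X γ)
      = ∫ ω, max (upperQuantile μ X α - X ω) 0 ∂μ := by
  rw [integral_max_sub_zero_eq_toReal _ hX.aemeasurable,
    ← setLIntegral_ofReal_upperQuantile_sub_eq hX hα0 hα1,
    ← integral_max_sub_zero_eq_toReal _ (aemeasurable_upperQuantile hX hα1.le)]
  exact setIntegral_congr_fun measurableSet_Ioo fun γ hγ =>
    (max_eq_left (sub_nonneg.mpr (upperQuantile_le_of_mem_Ioo hX hα1 hγ))).symm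

theorem integrableOn_upperQuantile [IsProbabilityMeasure μ] (hX : Measurable X)
    (hXint : Integrable X μ) {α : ℝ} (hα0 : 0 < α) (hα1 : α < 1) :
    IntegrableOn (upperQuantile μ X) (Ioo 0 α) := by
  have hgap : IntegrableOn (fun γ => upperQuantile μ X α - upperQuantile μ X γ) (Ioo 0 α) := by
    refine ⟨((aemeasurable_upperQuantile hX hα1.le).const_sub _).aestronglyMeasurable,
      (hasFiniteIntegral_iff_ofReal ?_).mpr ?_⟩
    · exact (ae_restrict_mem measurableSet_Ioo).mono fun γ hγ =>
        sub_nonneg.mpr (upperQuantile_le_of_mem_Ioo hX hα1 hγ)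
    · rw [setLIntegral_ofReal_upperQuantile_sub_eq hX hα0 hα1]
      exact ((integrable_const _).sub hXint).lintegral_lt_top
  exact ((integrable_const _).sub hgap).congr
    (.of_forall fun γ => sub_sub_cancel _ (upperQuantile μ X γ))

theorem setIntegral_sub_upperQuantile_le [IsProbabilityMeasure μ] (hX : Measurable X)
    (hXint : Integrable X μ) {α : ℝ} (hα0 : 0 < α) (hα1 : α < 1) (η : ℝ) :
    ∫ γ in Ioo 0 α, (η - upperQuantile μ X γ) ≤ ∫ ω, max (η - X ω) 0 ∂μ := by
  have hint := (integrable_const η).sub (integrableOn_upperQuantile hX hXint hα0 hα1)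
  calc ∫ γ in Ioo 0 α, (η - upperQuantile μ X γ)
      ≤ ∫ γ in Ioo 0 α, max (η - upperQuantile μ X γ) 0 :=
        integral_mono hint hint.pos_part fun γ => le_max_left _ _
    _ = (∫⁻ γ in Ioo 0 α, ENNReal.ofReal (η - upperQuantile μ X γ)).toReal :=
        integral_max_sub_zero_eq_toReal _ (aemeasurable_upperQuantile hX hα1.le) η
    _ ≤ (∫⁻ ω, ENNReal.ofReal (η - X ω) ∂μ).toReal :=
        ENNReal.toReal_mono ((integrable_const η).sub hXint).lintegral_lt_top.ne
          (setLIntegral_ofReal_sub_upperQuantile_le hX hα1.le η)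
    _ = ∫ ω, max (η - X ω) 0 ∂μ := (integral_max_sub_zero_eq_toReal _ hX.aemeasurable η).symm

end ProbabilityTheory

open ProbabilityTheory in
/-- CVaR as an average of VaR: for `α ∈ (0,1)` and integrable `X`,
`CVaR_α(X) = (1/α) ∫₀^α VaR_γ(X) dγ`, where
`VaR_γ(X) = inf {c : P(X + c < 0) ≤ γ}` and
`CVaR_α(X) = inf_η {(1/α) E[(η - X)⁺] - η}`. -/
theorem cvar_integral_of_var
    {Ω : Type*} [MeasurableSpace Ω] (μ : Measure Ω) [IsProbabilityMeasure μ]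
    (X : Ω → ℝ) (hX : Measurable X) (hXint : Integrable X μ)
    (α : ℝ) (hα0 : 0 < α) (hα1 : α < 1) :
    (⨅ η : ℝ, ((1 / α) * ∫ ω, max (η - X ω) 0 ∂μ - η))
      = (1 / α) * ∫ γ in Set.Ioo (0 : ℝ) α,
          sInf {c : ℝ | (μ {ω | X ω + c < 0}).toReal ≤ γ} := by
  set q := upperQuantile μ X
  set A := ∫ γ in Ioo 0 α, q γ
  have hmean : ∀ η, ∫ γ in Ioo 0 α, (η - q γ) = α * η - A := fun η => by
    rw [integral_sub (integrable_const η) (integrableOn_upperQuantile hX hXint hα0 hα1),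
      setIntegral_const, Real.volume_real_Ioo_of_le hα0.le, sub_zero, smul_eq_mul]
  have hshift : ∀ η, 1 / α * (α * η - A) - η = 1 / α * -A := fun η => by
    field_simp
    ring
  simp_rw [sInf_setOf_measure_add_lt_zero_le_eq_neg_upperQuantile, integral_neg]
  refine ciInf_eq_of_forall_ge_of_forall_gt_exists_lt (fun η => ?_) fun w hw => ⟨q α, ?_⟩
  · rw [← hshift η, ← hmean η]
    gcongr
    exact setIntegral_sub_upperQuantile_le hX hXint hα0 hα1 η
  · rwa [← setIntegral_upperQuantile_sub_eq hX hα0 hα1, hmean, hshift]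
end
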